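/- arXiv:1301.6860 — 3 statements merged into one kernel-verified Lean document; each statement's English description precedes it below -/
import Mathlib

section
/- The polynomial p(x₁,x₂,x₃) = (x₁² − 1)·x₂·x₃ belongs to the Smith–Kidger Type 4 space P₂ ⊕ span{x₁x₂x₃, x₁²x₂x₃, x₁x₂²x₃, x₁x₂x₃²} and vanishes at all eight vertices (±1,±1,±1) and all six face-centroids (±1,0,0), (0,±1,0), (0,0,±1) of the cube [−1,1]³, yet p is not the zero polynomial; hence the 14 point-evaluation functionals are not unisolvent on the Type 4 space. -/
open MvPolynomial

noncomputable def SK4 : Submodule ℝ (MvPolynomial (Fin 3) ℝ) :=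
  MvPolynomial.restrictTotalDegree (Fin 3) ℝ 2 ⊔
    Submodule.span ℝ {X 0 * X 1 * X 2, X 0 ^ 2 * X 1 * X 2, X 0 * X 1 ^ 2 * X 2,
      X 0 * X 1 * X 2 ^ 2}

/-- The 13 nodes other than... : all 14 nodes vanishing predicate. -/
def vanishesAtNodes (p : MvPolynomial (Fin 3) ℝ) : Prop :=
  (∀ j k l : ℝ, (j = 1 ∨ j = -1) → (k = 1 ∨ k = -1) → (l = 1 ∨ l = -1) →
      eval ![j, k, l] p = 0) ∧
  (∀ s : ℝ, (s = 1 ∨ s = -1) →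
      eval ![s, 0, 0] p = 0 ∧ eval ![0, s, 0] p = 0 ∧ eval ![0, 0, s] p = 0)

theorem stmt0 :
    ((X 0 ^ 2 - 1) * X 1 * X 2 : MvPolynomial (Fin 3) ℝ) ∈ SK4 ∧
    vanishesAtNodes ((X 0 ^ 2 - 1) * X 1 * X 2) ∧
    ((X 0 ^ 2 - 1) * X 1 * X 2 : MvPolynomial (Fin 3) ℝ) ≠ 0 ∧
    ¬ (∀ p ∈ SK4, vanishesAtNodes p → p = 0) := by
  have hmem : ((X 0 ^ 2 - 1) * X 1 * X 2 : MvPolynomial (Fin 3) ℝ) ∈ SK4 := by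
    have h1 : (X 0 ^ 2 * X 1 * X 2 : MvPolynomial (Fin 3) ℝ) ∈ SK4 :=
      Submodule.mem_sup_right (Submodule.subset_span (by simp))
    have h2 : (X 1 * X 2 : MvPolynomial (Fin 3) ℝ) ∈ SK4 := by
      apply Submodule.mem_sup_left
      rw [mem_restrictTotalDegree]
      refine le_trans (totalDegree_mul _ _) ?_
      simp [totalDegree_X]
    have : ((X 0 ^ 2 - 1) * X 1 * X 2 : MvPolynomial (Fin 3) ℝ)
        = X 0 ^ 2 * X 1 * X 2 - X 1 * X 2 := by ring
    rw [this]
    exact Submodule.sub_mem _ h1 h2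
  have hvan : vanishesAtNodes ((X 0 ^ 2 - 1) * X 1 * X 2 : MvPolynomial (Fin 3) ℝ) := by
    constructor
    · rintro j k l (rfl | rfl) _ _ <;> simp
    · rintro s _ ; refine ⟨?_, ?_, ?_⟩ <;> simp
  have hne : ((X 0 ^ 2 - 1) * X 1 * X 2 : MvPolynomial (Fin 3) ℝ) ≠ 0 := by
    intro h
    have := congrArg (eval ![(0:ℝ), 1, 1]) h
    simp at this
  exact ⟨hmem, hvan, hne, fun h => hne (h _ hmem hvan)⟩
end

section
/- The 14 functions φ^V_{(j,k,l)} = (1/16)(−1 + x₁²+x₂²+x₃²) + (1/8)(jk·x₁x₂ + jl·x₁x₃ + kl·x₂x₃ + jkl·x₁x₂x₃ + j·x₁x₃² + k·x₂x₁² + l·x₃x₂²) for (j,k,l) ∈ {−1,1}³, and φ^F_{(j,k,l)} = 1/4 + (1/2)(jx₁+kx₂+lx₃) + (1/4)(−(x₁²+x₂²+x₃²) + 2(|j|x₁²+|k|x₂²+|l|x₃²)) − (1/2)(j·x₁x₃² + k·x₂x₁² + l·x₃x₂²) for (j,k,l) ∈ {(±1,0,0),(0,±1,0),(0,0,±1)},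 form a dual basis for point evaluation: each function takes the value 1 at its associated node and 0 at the other 13 nodes (vertices (±1,±1,±1) and face-centroids). -/
/-- Vertex basis function associated with vertex `(j,k,l)`, evaluated at `(x₁,x₂,x₃)`. -/
noncomputable def phiV (j k l x₁ x₂ x₃ : ℝ) : ℝ :=
  (1 / 16) * (-1 + x₁ ^ 2 + x₂ ^ 2 + x₃ ^ 2) +
    (1 / 8) * (j * k * (x₁ * x₂) + j * l * (x₁ * x₃) + k * l * (x₂ * x₃) +
      j * k * l * (x₁ * x₂ * x₃) + j * (x₁ * x₃ ^ 2) + k * (x₂ * x₁ ^ 2) + l * (x₃ * x₂ ^ 2))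

/-- Face basis function associated with face-centroid `(j,k,l)` (one coordinate `±1`,
the others `0`), evaluated at `(x₁,x₂,x₃)`.  Here `|j| = j ^ 2` since `j ∈ {-1,0,1}`. -/
noncomputable def phiF (j k l x₁ x₂ x₃ : ℝ) : ℝ :=
  1 / 4 + (1 / 2) * (j * x₁ + k * x₂ + l * x₃) +
    (1 / 4) * (-(x₁ ^ 2 + x₂ ^ 2 + x₃ ^ 2) +
      2 * (j ^ 2 * x₁ ^ 2 + k ^ 2 * x₂ ^ 2 + l ^ 2 * x₃ ^ 2)) -
    (1 / 2) * (j * (x₁ * x₃ ^ 2) + k * (x₂ * x₁ ^ 2) + l * (x₃ * x₂ ^ 2))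

/-- The eight vertices of `[-1,1]³`. -/
def vertices : Set (ℝ × ℝ × ℝ) :=
  {v | (v.1 = 1 ∨ v.1 = -1) ∧ (v.2.1 = 1 ∨ v.2.1 = -1) ∧ (v.2.2 = 1 ∨ v.2.2 = -1)}

/-- The six face-centroids of `[-1,1]³`. -/
def centroids : Set (ℝ × ℝ × ℝ) :=
  {(1, 0, 0), (-1, 0, 0), (0, 1, 0), (0, -1, 0), (0, 0, 1), (0, 0, -1)}


lemma mem14 (p : ℝ × ℝ × ℝ) (hp : p ∈ vertices ∪ centroids) :
    p = (1,1,1) ∨ p = (1,1,-1) ∨ p = (1,-1,1) ∨ p = (1,-1,-1) ∨ p = (-1,1,1) ∨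
    p = (-1,1,-1) ∨ p = (-1,-1,1) ∨ p = (-1,-1,-1) ∨ p = (1,0,0) ∨ p = (-1,0,0) ∨
    p = (0,1,0) ∨ p = (0,-1,0) ∨ p = (0,0,1) ∨ p = (0,0,-1) := by
  rcases hp with h | h
  · obtain ⟨x, y, z⟩ := p
    obtain ⟨h1 | h1, h2 | h2, h3 | h3⟩ := h <;> subst_vars <;> simp
  · simp only [centroids, Set.mem_insert_iff, Set.mem_singleton_iff] at h
    tauto

set_option maxHeartbeats 2000000 in
theorem stmt8 :
    (∀ n ∈ vertices, ∀ x ∈ vertices ∪ centroids,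
      phiV n.1 n.2.1 n.2.2 x.1 x.2.1 x.2.2 = if x = n then 1 else 0) ∧
    (∀ n ∈ centroids, ∀ x ∈ vertices ∪ centroids,
      phiF n.1 n.2.1 n.2.2 x.1 x.2.1 x.2.2 = if x = n then 1 else 0) := by
  constructor
  · rintro ⟨a, b, c⟩ ⟨(rfl | rfl), (rfl | rfl), (rfl | rfl)⟩ x hx <;>
    rcases mem14 x hx with rfl|rfl|rfl|rfl|rfl|rfl|rfl|rfl|rfl|rfl|rfl|rfl|rfl|rfl <;>
    norm_num [phiV, Prod.ext_iff]
  · intro n hn x hx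
    simp only [centroids, Set.mem_insert_iff, Set.mem_singleton_iff] at hn
    rcases hn with rfl|rfl|rfl|rfl|rfl|rfl <;>
    rcases mem14 x hx with rfl|rfl|rfl|rfl|rfl|rfl|rfl|rfl|rfl|rfl|rfl|rfl|rfl|rfl <;>
    norm_num [phiF, Prod.ext_iff]
end

section
/- For any function values φ(M₁),…,φ(M₆) assigned at the six face-centroids, the rotation interpolant Rφ = Σᵢ φ(Mᵢ)ψᵢ satisfies: the restriction of Rφ to the face x_j = 1 minus φ(M_j) equals the restriction of Rφ to the face x_j = −1 minus φ(M_{7−j}), for each j = 1,2,3 (as polynomials in the two variables complementary to x_j). -/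
/-- Rotation-element basis function: `psi i true = ψ_i`, `psi i false = ψ_{7-i}`. -/
noncomputable def psi (i : Fin 3) (s : Bool) (x : Fin 3 → ℝ) : ℝ :=
  (1 / 6) * (1 + (if s then 3 else -3) * x i +
    ∑ j ∈ Finset.univ.erase i, (x i ^ 2 - x j ^ 2))

/-- Rotation interpolant from the six face-centroid values `c (i, s)`
(value at `±e_i` according to `s`). -/
noncomputable def rotInterp (c : Fin 3 × Bool → ℝ) (x : Fin 3 → ℝ) : ℝ :=
  ∑ m : Fin 3 × Bool, c m * psi m.1 m.2 x

theorem stmt15 (c : Fin 3 × Bool → ℝ) :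
    ∀ j : Fin 3, ∀ x y : Fin 3 → ℝ, x j = 1 → y j = -1 →
      (∀ k : Fin 3, k ≠ j → x k = y k) →
      rotInterp c x - c (j, true) = rotInterp c y - c (j, false) := by
  intro j x y hx hy hk
  have e0 : (Finset.univ.erase (0:Fin 3)) = {1,2} := by decide
  have e1 : (Finset.univ.erase (1:Fin 3)) = {0,2} := by decide
  have e2 : (Finset.univ.erase (2:Fin 3)) = {0,1} := by decide
  have sp : ∀ (a b : Fin 3), a ≠ b → ∀ f : Fin 3 → ℝ,
      ∑ k ∈ ({a,b} : Finset (Fin 3)), f k = f a + f b := fun a b h f => Finset.sum_pair h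
  fin_cases j
  · show rotInterp c x - c (0, true) = rotInterp c y - c (0, false)
    simp only [rotInterp, psi, Fintype.sum_prod_type, Fin.sum_univ_three,
      Fintype.sum_bool, e0, e1, e2, sp 1 2 (by decide), sp 0 2 (by decide),
      sp 0 1 (by decide), if_true, Bool.false_eq_true, if_false]
    rw [show x 0 = (1:ℝ) from hx, show y 0 = (-1:ℝ) from hy,
      hk 1 (by decide), hk 2 (by decide)]
    ring
  · show rotInterp c x - c (1, true) = rotInterp c y - c (1, false)
    simp only [rotInterp, psi, Fintype.sum_prod_type, Fin.sum_univ_three,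
      Fintype.sum_bool, e0, e1, e2, sp 1 2 (by decide), sp 0 2 (by decide),
      sp 0 1 (by decide), if_true, Bool.false_eq_true, if_false]
    rw [show x 1 = (1:ℝ) from hx, show y 1 = (-1:ℝ) from hy,
      hk 0 (by decide), hk 2 (by decide)]
    ring
  · show rotInterp c x - c (2, true) = rotInterp c y - c (2, false)
    simp only [rotInterp, psi, Fintype.sum_prod_type, Fin.sum_univ_three,
      Fintype.sum_bool, e0, e1, e2, sp 1 2 (by decide), sp 0 2 (by decide),
      sp 0 1 (by decide), if_true, Bool.false_eq_true, if_false]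
    rw [show x 2 = (1:ℝ) from hx, show y 2 = (-1:ℝ) from hy,
      hk 0 (by decide), hk 1 (by decide)]
    ring
end
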